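/- arXiv:2311.12402 — 2 statements merged into one kernel-verified Lean document; each statement's English description precedes it below -/
import Mathlib

section
/- Let Λ₀ ⋊ A₄ be the semidirect product where Λ₀ = {(x₁,x₂,x₃,x₄) ∈ ℤ⁴ : x₁+x₂+x₃+x₄ = 0} and A₄ acts by permuting coordinates. Then every group homomorphism from Λ₀ ⋊ A₄ to the infinite dihedral group D_∞ has finite image. -/
/-- The subgroup `Λ₀` of `ℤⁿ` consisting of tuples whose coordinates sum to zero. -/
def sumZero (n : ℕ) : AddSubgroup (Fin n → ℤ) where
  carrier := {x | ∑ i, x i = 0}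
  add_mem' := by
    intro a b ha hb
    simp only [Set.mem_setOf_eq, Pi.add_apply, Finset.sum_add_distrib] at *
    rw [ha, hb, add_zero]
  zero_mem' := by simp
  neg_mem' := by
    intro a ha
    simp only [Set.mem_setOf_eq, Pi.neg_apply, Finset.sum_neg_distrib] at *
    rw [ha, neg_zero]

/-- The multiplicative group structure that older Mathlib put on `AddAut A`
(multiplication is composition), restored here since `AddAut A` is now an additive group. -/
instance AddAut.groupOld (A : Type*) [Add A] : Group (AddAut A) where
  mul g h := AddEquiv.trans h g
  one := AddEquiv.refl _
  inv := AddEquiv.symm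
  mul_assoc _ _ _ := rfl
  one_mul _ := rfl
  mul_one _ := rfl
  inv_mul_cancel := AddEquiv.self_trans_symm

/-- The inverse in `AddAut.groupOld` is `symm`. -/
@[simp]
theorem AddAut.inv_apply_old {A : Type*} [Add A] (e : AddAut A) (a : A) : e⁻¹ a = e.symm a :=
  rfl

/-- The identity in `AddAut.groupOld` acts trivially. -/
@[simp]
theorem AddAut.one_apply_old {A : Type*} [Add A] (a : A) : (1 : AddAut A) a = a :=
  rfl

/-- The action of permutations on `Λ₀` by permuting coordinates. -/
def permAddAut (n : ℕ) : Equiv.Perm (Fin n) →* AddAut (sumZero n) where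
  toFun σ :=
    { toFun := fun x => ⟨x.1 ∘ σ.symm, by
        have := x.2
        show ∑ i, _ = 0
        simpa [Function.comp] using (Equiv.sum_comp σ.symm x.1).trans this⟩
      invFun := fun x => ⟨x.1 ∘ σ, by
        have := x.2
        show ∑ i, _ = 0
        simpa [Function.comp] using (Equiv.sum_comp σ x.1).trans this⟩
      left_inv := fun x => by
        ext i
        simp
      right_inv := fun x => by
        ext i
        simp
      map_add' := fun x y => rfl }
  map_one' := by
    ext x i
    rfl
  map_mul' σ τ := by
    ext x i
    rfl

/-- The action of the alternating group on `Multiplicative Λ₀` by permuting coordinates. -/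
def altAct (n : ℕ) : alternatingGroup (Fin n) →* MulAut (Multiplicative (sumZero n)) where
  toFun σ :=
    { toFun := fun x => Multiplicative.ofAdd (permAddAut n σ.1 x.toAdd)
      invFun := fun x => Multiplicative.ofAdd (permAddAut n σ.1⁻¹ x.toAdd)
      left_inv := fun x => by simp
      right_inv := fun x => by simp
      map_mul' := fun x y => by
        show Multiplicative.ofAdd (permAddAut n σ.1 (x * y).toAdd) = _
        rw [show (x * y).toAdd = x.toAdd + y.toAdd from rfl, map_add, ofAdd_add] }
  map_one' := by
    ext x : 1
    show Multiplicative.ofAdd (permAddAut n (1 : Equiv.Perm (Fin n)) x.toAdd) = x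
    simp
  map_mul' σ τ := by
    ext x : 1
    show Multiplicative.ofAdd (permAddAut n (σ.1 * τ.1) x.toAdd) = _
    rw [map_mul]
    rfl

/-- The semidirect product `Λ₀ ⋊ Aₙ`. -/
abbrev LamSemidirect (n : ℕ) :=
  Multiplicative (sumZero n) ⋊[altAct n] alternatingGroup (Fin n)


/-!
The infinite dihedral group has no element of order 3, so a homomorphism `φ` from `Λ₀ ⋊ A₄`
to it kills the 3-cycles, which generate `A₄`. Hence `φ` is trivial on `A₄`, and on `Λ₀` it is
invariant under the `A₄`-action. For a 3-cycle `σ`, invariance gives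
`φ x ^ 3 = φ (x + σ x + σ² x)`, and `x + σ x + σ² x = 0` as soon as `x` vanishes at the fixed
point of `σ`. Every `x ∈ Λ₀` is a sum of a vector vanishing at `3` and one vanishing at `0`,
so `φ` is trivial on `Λ₀` as well.
-/

theorem DihedralGroup.eq_one_of_pow_eq_one_of_odd {x : DihedralGroup 0} {k : ℕ} (hk : Odd k)
    (hx : x ^ k = 1) : x = 1 := by
  cases x with
  | r i =>
    rw [DihedralGroup.r_pow, DihedralGroup.one_def, DihedralGroup.r.injEq] at hx
    rw [DihedralGroup.one_def, mul_eq_zero.1 hx |>.resolve_right (by exact_mod_cast hk.pos.ne')]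
  | sr i =>
    have h2 : 2 ∣ k := DihedralGroup.orderOf_sr i ▸ orderOf_dvd_of_pow_eq_one hx
    exact absurd (even_iff_two_dvd.2 h2) (Nat.not_even_iff_odd.2 hk)

theorem alternatingGroup.monoidHom_eq_one_of_pow_three_eq_one {α G : Type*} [Fintype α]
    [DecidableEq α] [Group G] (hG : ∀ g : G, g ^ 3 = 1 → g = 1) (f : alternatingGroup α →* G) :
    f = 1 := by
  refine MonoidHom.eq_of_eqOn_dense alternatingGroup.closure_isThreeCycles_eq_top
    fun g (hg : Equiv.Perm.IsThreeCycle (g : Equiv.Perm α)) => hG _ ?_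
  have hg3 : g ^ 3 = 1 := Subtype.ext <| by
    simpa [hg.orderOf] using pow_orderOf_eq_one (g : Equiv.Perm α)
  rw [← map_pow, hg3, map_one]

theorem SemidirectProduct.map_inl_aut_of_comp_inr_eq_one {N H G : Type*} [Group N] [Group H]
    [Group G] {ψ : H →* MulAut N} {φ : N ⋊[ψ] H →* G} (hφ : φ.comp inr = 1) (h : H) (n : N) :
    φ (inl (ψ h n)) = φ (inl n) := by
  have hr : ∀ h, φ (inr h) = 1 := DFunLike.congr_fun hφ
  rw [inl_aut, map_mul, map_mul, hr, hr, one_mul, mul_one]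

theorem coe_permAddAut {n : ℕ} (σ : Equiv.Perm (Fin n)) (x : sumZero n) :
    (permAddAut n σ x : Fin n → ℤ) = x ∘ σ.symm :=
  rfl

theorem sum_sumZero_four (x : sumZero 4) :
    (x : Fin 4 → ℤ) 0 + (x : Fin 4 → ℤ) 1 + (x : Fin 4 → ℤ) 2 + (x : Fin 4 → ℤ) 3 = 0 :=
  Fin.sum_univ_four (x : Fin 4 → ℤ) ▸ x.2

def cycle012 : alternatingGroup (Fin 4) :=
  ⟨⟨![1, 2, 0, 3], ![2, 0, 1, 3], by decide, by decide⟩,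
    Equiv.Perm.mem_alternatingGroup.2 (by decide)⟩

def cycle123 : alternatingGroup (Fin 4) :=
  ⟨⟨![0, 2, 3, 1], ![0, 3, 1, 2], by decide, by decide⟩,
    Equiv.Perm.mem_alternatingGroup.2 (by decide)⟩

theorem add_permAddAut_cycle012_add_eq_zero (x : sumZero 4) (hx : (x : Fin 4 → ℤ) 3 = 0) :
    x + permAddAut 4 cycle012 x + permAddAut 4 cycle012 (permAddAut 4 cycle012 x) = 0 := by
  have hs := sum_sumZero_four x
  ext i
  fin_cases i <;> simp [coe_permAddAut, cycle012] <;> omega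

theorem add_permAddAut_cycle123_add_eq_zero (x : sumZero 4) (hx : (x : Fin 4 → ℤ) 0 = 0) :
    x + permAddAut 4 cycle123 x + permAddAut 4 cycle123 (permAddAut 4 cycle123 x) = 0 := by
  have hs := sum_sumZero_four x
  ext i
  fin_cases i <;> simp [coe_permAddAut, cycle123] <;> omega

theorem sumZero_four_monoidHom_eq_one {G : Type*} [Group G] (hG : ∀ g : G, g ^ 3 = 1 → g = 1)
    (f : Multiplicative (sumZero 4) →* G) (hf : ∀ σ x, f (altAct 4 σ x) = f x) : f = 1 := by
  have of_orbit_sum_eq_zero : ∀ (σ : alternatingGroup (Fin 4)) (x : sumZero 4),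
      x + permAddAut 4 σ x + permAddAut 4 σ (permAddAut 4 σ x) = 0 → f (.ofAdd x) = 1 := by
    intro σ x hx
    apply hG
    calc f (.ofAdd x) ^ 3
        = f (.ofAdd x) * f (altAct 4 σ (.ofAdd x)) * f (altAct 4 σ (altAct 4 σ (.ofAdd x))) := by
          rw [hf, hf, hf, pow_three, mul_assoc]
      _ = f (.ofAdd (x + permAddAut 4 σ x + permAddAut 4 σ (permAddAut 4 σ x))) := by
          rw [ofAdd_add, ofAdd_add, map_mul, map_mul]; rfl
      _ = 1 := by rw [hx, ofAdd_zero, map_one]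
  refine MonoidHom.ext fun x => ?_
  obtain ⟨x, rfl⟩ := Multiplicative.ofAdd.surjective x
  let y : sumZero 4 := ⟨![(x : Fin 4 → ℤ) 0, -(x : Fin 4 → ℤ) 0, 0, 0],
    by simp [sumZero, Fin.sum_univ_four]⟩
  have hy : f (.ofAdd y) = 1 :=
    of_orbit_sum_eq_zero cycle012 y (add_permAddAut_cycle012_add_eq_zero y rfl)
  have hxy : f (.ofAdd (x - y)) = 1 :=
    of_orbit_sum_eq_zero cycle123 _ (add_permAddAut_cycle123_add_eq_zero _ (by simp [y]))
  rw [MonoidHom.one_apply, ← add_sub_cancel y x, ofAdd_add, map_mul, hy, hxy, one_mul]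

/-- Every group homomorphism from `Λ₀ ⋊ A₄` to the infinite dihedral group `D_∞`
(realised as `DihedralGroup 0`, since `ZMod 0 = ℤ`) has finite image. -/
theorem hom_LamSemidirect_four_to_infinite_dihedral_finite_image
    (φ : LamSemidirect 4 →* DihedralGroup 0) : (Set.range φ).Finite := by
  have hG : ∀ g : DihedralGroup 0, g ^ 3 = 1 → g = 1 := fun _ =>
    DihedralGroup.eq_one_of_pow_eq_one_of_odd (by decide)
  have hinr : φ.comp SemidirectProduct.inr = 1 :=
    alternatingGroup.monoidHom_eq_one_of_pow_three_eq_one hG _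
  have hinl : φ.comp SemidirectProduct.inl = 1 :=
    sumZero_four_monoidHom_eq_one hG _ (SemidirectProduct.map_inl_aut_of_comp_inr_eq_one hinr)
  have hφ : φ = 1 := SemidirectProduct.hom_ext hinl hinr
  subst hφ
  exact (Set.finite_singleton 1).subset (Set.range_subset_iff.2 fun _ => rfl)
end

section
/- If a subgroup H of a group G has finite index k and H acts on a metric space X with unbounded orbits, then G admits an action on the product metric space X^k (with, say, the sup metric) with unbounded orbits, via the induced action on the coinduced space. -/
/-!
Choosing coset representatives `c.out`, the `H`-equivariant maps `G → X` are the maps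
`G ⧸ H → X`, and `G` acts on them by `(g • f) c = ρ (c.out⁻¹ * g * (g⁻¹ • c).out) (f (g⁻¹ • c))`.
Each `g` permutes the coordinates and applies an isometry in each of them, hence is an
isometry of the sup metric. At a coset `c`, the element `c.out * h * c.out⁻¹` moves the
constant map at `x` to a map whose `c`-coordinate is `ρ h x`, so the `c`-coordinate of the
`G`-orbit of that constant map contains the whole `H`-orbit of `x`.
-/

open Bornology

namespace IsometryEquiv

variable {Y Z : Type*} [PseudoEMetricSpace Y] [PseudoEMetricSpace Z]

def autCongr (ψ : Y ≃ᵢ Z) : (Y ≃ᵢ Y) ≃* (Z ≃ᵢ Z) where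
  toFun f := ψ.symm.trans (f.trans ψ)
  invFun f := ψ.trans (f.trans ψ.symm)
  left_inv f := by ext; simp
  right_inv f := by ext; simp
  map_mul' f₁ f₂ := by ext; simp [mul_apply]

@[simp]
theorem autCongr_apply (ψ : Y ≃ᵢ Z) (f : Y ≃ᵢ Y) (z : Z) : autCongr ψ f z = ψ (f (ψ.symm z)) :=
  rfl

end IsometryEquiv

namespace Subgroup

variable {G : Type*} [Group G] (H : Subgroup G)

noncomputable def coindCocycle (g : G) (c : G ⧸ H) : H :=
  ⟨c.out⁻¹ * g * (g⁻¹ • c).out, by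
    have hc : (c.out : G ⧸ H) = (g * (g⁻¹ • c).out : G) := by
      rw [QuotientGroup.out_eq', ← smul_eq_mul, MulAction.Quotient.mk_smul_out, smul_inv_smul]
    simpa [mul_assoc] using QuotientGroup.eq.mp hc⟩

@[simp]
theorem coe_coindCocycle (g : G) (c : G ⧸ H) :
    (H.coindCocycle g c : G) = c.out⁻¹ * g * (g⁻¹ • c).out :=
  rfl

@[simp]
theorem coindCocycle_one (c : G ⧸ H) : H.coindCocycle 1 c = 1 := by
  ext; simp

theorem coindCocycle_mul (g₁ g₂ : G) (c : G ⧸ H) :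
    H.coindCocycle (g₁ * g₂) c = H.coindCocycle g₁ c * H.coindCocycle g₂ (g₁⁻¹ • c) := by
  ext
  simp only [coe_coindCocycle, coe_mul, mul_inv_rev, mul_smul]
  group

theorem coindCocycle_conj_out (c : G ⧸ H) (h : H) :
    H.coindCocycle (c.out * h * c.out⁻¹) c = h := by
  have hc : (c.out * h * c.out⁻¹)⁻¹ • c = c := by
    set u := c.out
    rw [← QuotientGroup.out_eq' c, MulAction.Quotient.smul_mk, smul_eq_mul, QuotientGroup.eq]
    simp [u, mul_assoc]
  ext
  simp only [coe_coindCocycle, hc]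
  group

section Coinduced

variable {X : Type*} [PseudoEMetricSpace X] (ρ : H →* (X ≃ᵢ X))

noncomputable def coindMap (g : G) (f : G ⧸ H → X) : G ⧸ H → X :=
  fun c => ρ (H.coindCocycle g c) (f (g⁻¹ • c))

theorem coindMap_one (f : G ⧸ H → X) : H.coindMap ρ 1 f = f := by
  funext c
  simp [coindMap]

theorem coindMap_mul (g₁ g₂ : G) (f : G ⧸ H → X) :
    H.coindMap ρ (g₁ * g₂) f = H.coindMap ρ g₁ (H.coindMap ρ g₂ f) := by
  funext c
  simp [coindMap, coindCocycle_mul, mul_smul, IsometryEquiv.mul_apply]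

variable [Fintype (G ⧸ H)]

theorem isometry_coindMap (g : G) : Isometry (H.coindMap ρ g) := by
  intro f₁ f₂
  simp only [edist_pi_def, Finset.sup_univ_eq_iSup, coindMap, IsometryEquiv.edist_eq]
  exact (MulAction.toPerm g⁻¹).iSup_comp (g := fun c => edist (f₁ c) (f₂ c))

noncomputable def coindHom : G →* ((G ⧸ H → X) ≃ᵢ (G ⧸ H → X)) where
  toFun g :=
    { toFun := H.coindMap ρ g
      invFun := H.coindMap ρ g⁻¹
      left_inv f := by rw [← coindMap_mul, inv_mul_cancel, coindMap_one]
      right_inv f := by rw [← coindMap_mul, mul_inv_cancel, coindMap_one]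
      isometry_toFun := H.isometry_coindMap ρ g }
  map_one' := by ext f : 1; exact H.coindMap_one ρ f
  map_mul' g₁ g₂ := by ext f : 1; exact H.coindMap_mul ρ g₁ g₂ f

end Coinduced

theorem not_isBounded_range_coindHom_const {X : Type*} [PseudoMetricSpace X]
    (ρ : H →* (X ≃ᵢ X)) [Fintype (G ⧸ H)] {x : X}
    (hx : ¬IsBounded (Set.range fun h : H => ρ h x)) :
    ¬IsBounded (Set.range fun g : G => H.coindHom ρ g fun _ => x) := by
  set c : G ⧸ H := ((1 : G) : G ⧸ H)
  intro hb
  refine hx (((LipschitzWith.eval c).isBounded_image hb).subset ?_)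
  rintro _ ⟨h, rfl⟩
  exact ⟨_, ⟨c.out * h * c.out⁻¹, rfl⟩, congrArg (ρ · x) (H.coindCocycle_conj_out c h)⟩

end Subgroup

/-- If a subgroup `H` of a group `G` has finite index `k` and `H` acts by isometries on
a metric space `X` with an unbounded orbit, then `G` admits an action by isometries on
the product `X^k` (with the sup metric, the product metric of Mathlib) with an
unbounded orbit. -/
theorem coinduced_action_unbounded_orbit {G : Type*} [Group G] (H : Subgroup G)
    (k : ℕ) (hk : H.index = k) (hk0 : k ≠ 0)
    (X : Type*) [MetricSpace X] (ρ : H →* (X ≃ᵢ X))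
    (hunb : ∃ x : X, ¬ IsBounded (Set.range fun h : H => ρ h x)) :
    ∃ τ : G →* ((Fin k → X) ≃ᵢ (Fin k → X)),
      ∃ p : Fin k → X, ¬ IsBounded (Set.range fun g : G => τ g p) := by
  obtain ⟨x, hx⟩ := hunb
  have : H.FiniteIndex := ⟨hk ▸ hk0⟩
  let := H.fintypeQuotientOfFiniteIndex
  let ψ : (G ⧸ H → X) ≃ᵢ (Fin k → X) := IsometryEquiv.piCongrLeft' (Finite.equivFinOfCardEq hk)
  refine ⟨(IsometryEquiv.autCongr ψ).toMonoidHom.comp (H.coindHom ρ), ψ fun _ => x, ?_⟩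
  intro hb
  refine H.not_isBounded_range_coindHom_const ρ hx ?_
  have := ψ.symm.isometry.lipschitz.isBounded_image hb
  rw [← Set.range_comp] at this
  simpa [Function.comp_def] using this
end
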